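/- arXiv:math/0703644 — 2 statements merged into one kernel-verified Lean document; each statement's English description precedes it below -/
import Mathlib

section
/- Let X₀, X₁, …, X_t be subcategories of A such that X_n is a cogenerator for X_{n+1} for each 0 ≤ n < t, and such that X_t ⊥ X₀. If X_t is closed under extensions, then X₀ is an injective cogenerator for X_t. -/
open CategoryTheory CategoryTheory.Limits CategoryTheory.Abelian

universe w v u

variable {C : Type u} [Category.{v} C] [Abelian C]

/-- A class of objects is closed under isomorphisms. -/
def IsoClosed (𝒲 : Set C) : Prop :=
  ∀ ⦃A B : C⦄, (A ≅ B) → A ∈ 𝒲 → B ∈ 𝒲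

/-- A class of objects is closed under finite direct sums (part of being an
additive subcategory). -/
def SumClosed (𝒲 : Set C) : Prop :=
  ∀ ⦃A B : C⦄, A ∈ 𝒲 → B ∈ 𝒲 → (A ⊞ B) ∈ 𝒲

/-- A class of objects is closed under extensions. -/
def ExtensionClosed (𝒲 : Set C) : Prop :=
  ∀ ⦃A₁ A₂ A₃ : C⦄ (f : A₁ ⟶ A₂) (g : A₂ ⟶ A₃) (w : f ≫ g = 0),
    (ShortComplex.mk f g w).ShortExact → A₁ ∈ 𝒲 → A₃ ∈ 𝒲 → A₂ ∈ 𝒲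

/-- A class of objects is closed under kernels of epimorphisms. -/
def KerEpiClosed (𝒲 : Set C) : Prop :=
  ∀ ⦃A₁ A₂ A₃ : C⦄ (f : A₁ ⟶ A₂) (g : A₂ ⟶ A₃) (w : f ≫ g = 0),
    (ShortComplex.mk f g w).ShortExact → A₂ ∈ 𝒲 → A₃ ∈ 𝒲 → A₁ ∈ 𝒲

/-- A class of objects is closed under cokernels of monomorphisms. -/
def CokerMonoClosed (𝒲 : Set C) : Prop :=
  ∀ ⦃A₁ A₂ A₃ : C⦄ (f : A₁ ⟶ A₂) (g : A₂ ⟶ A₃) (w : f ≫ g = 0),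
    (ShortComplex.mk f g w).ShortExact → A₁ ∈ 𝒲 → A₂ ∈ 𝒲 → A₃ ∈ 𝒲

section ExtDefs

variable [HasExt.{w} C]

/-- `X ⊥ Y`, i.e. `Ext^i(X, Y) = 0` for all `i ≥ 1`. -/
def extPerp (X Y : C) : Prop :=
  ∀ i : ℕ, 1 ≤ i → Subsingleton (Abelian.Ext X Y i)

end ExtDefs

/-- `𝒲` is a cogenerator for `𝒳`: `𝒲 ⊆ 𝒳` and every object of `𝒳` embeds in an
object of `𝒲` with cokernel in `𝒳`. -/
def IsCogen (𝒲 𝒳 : Set C) : Prop :=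
  𝒲 ⊆ 𝒳 ∧ ∀ X ∈ 𝒳, ∃ (W X' : C) (i : X ⟶ W) (p : W ⟶ X') (w : i ≫ p = 0),
    W ∈ 𝒲 ∧ X' ∈ 𝒳 ∧ (ShortComplex.mk i p w).ShortExact

/-- `𝒱` is a generator for `𝒴`: `𝒱 ⊆ 𝒴` and every object of `𝒴` is a quotient of an
object of `𝒱` with kernel in `𝒴`. -/
def IsGen (𝒱 𝒴 : Set C) : Prop :=
  𝒱 ⊆ 𝒴 ∧ ∀ Y ∈ 𝒴, ∃ (Y' V : C) (i : Y' ⟶ V) (p : V ⟶ Y) (w : i ≫ p = 0),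
    V ∈ 𝒱 ∧ Y' ∈ 𝒴 ∧ (ShortComplex.mk i p w).ShortExact

section ExtDefs2

variable [HasExt.{w} C]

/-- `𝒲` is an injective cogenerator for `𝒳`. -/
def IsInjCogen (𝒲 𝒳 : Set C) : Prop :=
  IsCogen 𝒲 𝒳 ∧ ∀ X ∈ 𝒳, ∀ W ∈ 𝒲, extPerp X W

/-- `𝒱` is a projective generator for `𝒴`. -/
def IsProjGen (𝒱 𝒴 : Set C) : Prop :=
  IsGen 𝒱 𝒴 ∧ ∀ V ∈ 𝒱, ∀ Y ∈ 𝒴, extPerp V Y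

end ExtDefs2

/-- The data `(P, d, ε)` is a resolution of `M`: the augmented complex
`⋯ → P₁ → P₀ → M → 0` is exact. -/
structure IsResolution (P : ℕ → C) (d : ∀ n, P (n + 1) ⟶ P n) (M : C) (ε : P 0 ⟶ M) :
    Prop where
  w0 : d 0 ≫ ε = 0
  w : ∀ n, d (n + 1) ≫ d n = 0
  epi : Epi ε
  exact0 : (ShortComplex.mk (d 0) ε w0).Exact
  exact : ∀ n, (ShortComplex.mk (d (n + 1)) (d n) (w n)).Exact

/-- The data `(Q, δ, η)` is a coresolution of `M`: the augmented complex
`0 → M → Q⁰ → Q¹ → ⋯` is exact. -/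
structure IsCoresolution (Q : ℕ → C) (δ : ∀ n, Q n ⟶ Q (n + 1)) (M : C) (η : M ⟶ Q 0) :
    Prop where
  w0 : η ≫ δ 0 = 0
  w : ∀ n, δ n ≫ δ (n + 1) = 0
  mono : Mono η
  exact0 : (ShortComplex.mk η (δ 0) w0).Exact
  exact : ∀ n, (ShortComplex.mk (δ n) (δ (n + 1)) (w n)).Exact

/-- `Hom(W', -)` applied to the augmented complex `⋯ → P₁ → P₀ → M → 0` is exact for
every `W'` in `𝒳` (properness of the resolution). -/
def ResHomExact (𝒳 : Set C) (P : ℕ → C) (d : ∀ n, P (n + 1) ⟶ P n) {M : C}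
    (ε : P 0 ⟶ M) : Prop :=
  ∀ W ∈ 𝒳,
    (∀ φ : W ⟶ M, ∃ ψ : W ⟶ P 0, ψ ≫ ε = φ) ∧
    (∀ φ : W ⟶ P 0, φ ≫ ε = 0 → ∃ ψ : W ⟶ P 1, ψ ≫ d 0 = φ) ∧
    (∀ (n : ℕ) (φ : W ⟶ P (n + 1)), φ ≫ d n = 0 → ∃ ψ : W ⟶ P (n + 2), ψ ≫ d (n + 1) = φ)

/-- `Hom(-, W')` applied to the augmented complex `0 → M → Q⁰ → Q¹ → ⋯` is exact for
every `W'` in `𝒲` (properness of the coresolution). -/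
def CoresHomExact (𝒲 : Set C) (Q : ℕ → C) (δ : ∀ n, Q n ⟶ Q (n + 1)) {M : C}
    (η : M ⟶ Q 0) : Prop :=
  ∀ W ∈ 𝒲,
    (∀ φ : M ⟶ W, ∃ ψ : Q 0 ⟶ W, η ≫ ψ = φ) ∧
    (∀ φ : Q 0 ⟶ W, η ≫ φ = 0 → ∃ ψ : Q 1 ⟶ W, δ 0 ≫ ψ = φ) ∧
    (∀ (n : ℕ) (φ : Q (n + 1) ⟶ W), δ n ≫ φ = 0 → ∃ ψ : Q (n + 2) ⟶ W, δ (n + 1) ≫ ψ = φ)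

/-- `M` admits a proper `𝒳`-resolution, i.e. `M ∈ res~(𝒳)`. -/
def MemProperRes (𝒳 : Set C) (M : C) : Prop :=
  ∃ (P : ℕ → C) (d : ∀ n, P (n + 1) ⟶ P n) (ε : P 0 ⟶ M),
    (∀ n, P n ∈ 𝒳) ∧ IsResolution P d M ε ∧ ResHomExact 𝒳 P d ε

/-- `M` admits a proper `𝒲`-coresolution, i.e. `M ∈ cores~(𝒲)`. -/
def MemProperCores (𝒲 : Set C) (M : C) : Prop :=
  ∃ (Q : ℕ → C) (δ : ∀ n, Q n ⟶ Q (n + 1)) (η : M ⟶ Q 0),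
    (∀ n, Q n ∈ 𝒲) ∧ IsCoresolution Q δ M η ∧ CoresHomExact 𝒲 Q δ η

/-- `M` has finite `𝒴`-projective dimension: it admits a resolution
`0 → Y_n → ⋯ → Y_0 → M → 0` with all `Y_i` in `𝒴`, i.e. `M ∈ res^f(𝒴)`. -/
def FinResDim (𝒴 : Set C) (M : C) : Prop :=
  ∃ (n : ℕ) (P : ℕ → C) (d : ∀ k, P (k + 1) ⟶ P k) (ε : P 0 ⟶ M),
    (∀ k ≤ n, P k ∈ 𝒴) ∧ (∀ k, n < k → IsZero (P k)) ∧ IsResolution P d M ε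

/-- `M` has finite `𝒳`-injective dimension: it admits a coresolution
`0 → M → X^0 → ⋯ → X^n → 0` with all `X^i` in `𝒳`, i.e. `M ∈ cores^f(𝒳)`. -/
def FinCoresDim (𝒳 : Set C) (M : C) : Prop :=
  ∃ (n : ℕ) (Q : ℕ → C) (δ : ∀ k, Q k ⟶ Q (k + 1)) (η : M ⟶ Q 0),
    (∀ k ≤ n, Q k ∈ 𝒳) ∧ (∀ k, n < k → IsZero (Q k)) ∧ IsCoresolution Q δ M η

/-- The `ℤ`-indexed complex `(X, d)` is totally `𝒳`-acyclic: all terms lie in `𝒳`,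
it is exact, and `Hom(W, -)` and `Hom(-, W)` applied to it are exact for all `W ∈ 𝒳`. -/
structure IsTotallyAcyclic (𝒳 : Set C) (X : ℤ → C) (d : ∀ n : ℤ, X (n + 1) ⟶ X n) :
    Prop where
  mem : ∀ n, X n ∈ 𝒳
  w : ∀ n, d (n + 1) ≫ d n = 0
  exact : ∀ n, (ShortComplex.mk (d (n + 1)) (d n) (w n)).Exact
  homExact : ∀ W ∈ 𝒳, ∀ (n : ℤ) (φ : W ⟶ X (n + 1)), φ ≫ d n = 0 →
    ∃ ψ : W ⟶ X (n + 1 + 1), ψ ≫ d (n + 1) = φ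
  homExact' : ∀ W ∈ 𝒳, ∀ (n : ℤ) (φ : X (n + 1) ⟶ W), d (n + 1) ≫ φ = 0 →
    ∃ ψ : X n ⟶ W, d n ≫ ψ = φ

/-- The Gorenstein subcategory `G(𝒳)`: objects isomorphic to `Coker(∂₁)` of a totally
`𝒳`-acyclic complex. -/
def GorClass (𝒳 : Set C) : Set C :=
  {M | ∃ (X : ℤ → C) (d : ∀ n : ℤ, X (n + 1) ⟶ X n),
    IsTotallyAcyclic 𝒳 X d ∧ Nonempty (cokernel (d 0) ≅ M)}

/-- Iterated Gorenstein subcategories: `G^0(𝒳) = 𝒳`, `G^{n+1}(𝒳) = G(G^n(𝒳))`. -/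
def GorIter (𝒳 : Set C) : ℕ → Set C
  | 0 => 𝒳
  | n + 1 => GorClass (GorIter 𝒳 n)

/-- The upper triangular matrix morphism `[[a, b], [0, c]]` between biproducts. -/
noncomputable def triMat {P' P'' Q' Q'' : C} (a : P' ⟶ Q') (b : P'' ⟶ Q') (c : P'' ⟶ Q'') :
    P' ⊞ P'' ⟶ Q' ⊞ Q'' :=
  biprod.lift (biprod.fst ≫ a + biprod.snd ≫ b) (biprod.snd ≫ c)

open scoped Pseudoelement in
open CategoryTheory.Abelian.Pseudoelement in
/-- Composing two short exact sequences. -/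
lemma my_ses_comp {X W Cc V D : C} {i : X ⟶ W} {p : W ⟶ Cc} {w1 : i ≫ p = 0}
    (h1 : (ShortComplex.mk i p w1).ShortExact)
    {j : W ⟶ V} {q : V ⟶ D} {w2 : j ≫ q = 0}
    (h2 : (ShortComplex.mk j q w2).ShortExact) :
    ∃ (E : C) (r : V ⟶ E) (w : (i ≫ j) ≫ r = 0) (u : Cc ⟶ E) (v : E ⟶ D)
      (wuv : u ≫ v = 0),
      (ShortComplex.mk (i ≫ j) r w).ShortExact ∧ (ShortComplex.mk u v wuv).ShortExact := by
  have hmi : Mono i := h1.mono_f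
  have hmj : Mono j := h2.mono_f
  have hep : Epi p := h1.epi_g
  have heq : Epi q := h2.epi_g
  have hmk : Mono (i ≫ j) := mono_comp _ _
  refine ⟨cokernel (i ≫ j), cokernel.π _, cokernel.condition _, ?_⟩
  obtain ⟨u, hu⟩ := CokernelCofork.IsColimit.desc' h1.gIsCokernel (j ≫ cokernel.π (i ≫ j))
    (by rw [← Category.assoc]; exact cokernel.condition _)
  have hu : p ≫ u = j ≫ cokernel.π (i ≫ j) := hu
  have hjq : (i ≫ j) ≫ q = 0 := by rw [Category.assoc, w2, comp_zero]
  refine ⟨u, cokernel.desc (i ≫ j) q hjq, ?_, ?_, ?_⟩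
  · rw [← cancel_epi p, ← Category.assoc, hu, Category.assoc, cokernel.π_desc, w2, comp_zero]
  · -- first SES short exact
    refine ShortComplex.ShortExact.mk' ?_ hmk (coequalizer.π_epi)
    exact ShortComplex.exact_of_g_is_cokernel _ (cokernelIsCokernel (i ≫ j))
  · -- second SES short exact
    have h1ex : (ShortComplex.mk (i ≫ j) (cokernel.π (i ≫ j)) (cokernel.condition _)).Exact :=
      ShortComplex.exact_of_g_is_cokernel _ (cokernelIsCokernel (i ≫ j))
    have hrv : cokernel.π (i ≫ j) ≫ cokernel.desc (i ≫ j) q hjq = q := cokernel.π_desc _ _ _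
    refine ShortComplex.ShortExact.mk' ?_ ?_ ?_
    · -- exactness via pseudoelements
      apply Pseudoelement.exact_of_pseudo_exact _
      intro b hb
      obtain ⟨y, hy⟩ := pseudo_surjective_of_epi (cokernel.π (i ≫ j)) b
      have hqy : q y = 0 := by
        rw [← hrv, Pseudoelement.comp_apply, hy]; exact hb
      obtain ⟨a, ha⟩ := pseudo_exact_of_exact h2.exact y hqy
      refine ⟨p a, ?_⟩
      show u (p a) = b
      rw [← Pseudoelement.comp_apply, hu, Pseudoelement.comp_apply, ha, hy]
    · -- mono u
      apply mono_of_zero_of_map_zero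
      intro a ha
      obtain ⟨x, hx⟩ := pseudo_surjective_of_epi p a
      have : cokernel.π (i ≫ j) (j x) = 0 := by
        rw [← Pseudoelement.comp_apply, ← hu, Pseudoelement.comp_apply, hx]; exact ha
      obtain ⟨z, hz⟩ := pseudo_exact_of_exact h1ex (j x) this
      have hz' : j (i z) = j x := by rw [← Pseudoelement.comp_apply]; exact hz
      have hiz : i z = x := pseudo_injective_of_mono j hz'
      rw [← hx, ← hiz, ← Pseudoelement.comp_apply, w1]
      exact Pseudoelement.zero_apply _ z
    · -- epi v
      have : Epi (cokernel.π (i ≫ j) ≫ cokernel.desc (i ≫ j) q hjq) := by rw [hrv]; exact heq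
      exact epi_of_epi (cokernel.π (i ≫ j)) _

variable [EnoughProjectives C] [EnoughInjectives C] [HasExt.{w} C]

/-- Lemma 2.3(a): if `𝒳 n` is a cogenerator for `𝒳 (n+1)` for `n < t`,
`𝒳 t ⊥ 𝒳 0`, and `𝒳 t` is closed under extensions, then `𝒳 0` is an injective
cogenerator for `𝒳 t`. -/
theorem stmt_7 (t : ℕ) (𝒳 : ℕ → Set C)
    (hiso : ∀ n ≤ t, IsoClosed (𝒳 n)) (hsum : ∀ n ≤ t, SumClosed (𝒳 n))
    (hcog : ∀ n < t, IsCogen (𝒳 n) (𝒳 (n + 1)))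
    (hperp : ∀ X ∈ 𝒳 t, ∀ W ∈ 𝒳 0, extPerp X W)
    (hext : ExtensionClosed (𝒳 t)) :
    IsInjCogen (𝒳 0) (𝒳 t) := by
  have hsub : ∀ m, ∀ k, m + k ≤ t → 𝒳 m ⊆ 𝒳 (m + k) := by
    intro m k
    induction k with
    | zero => intro _; exact subset_rfl
    | succ k ih =>
      intro h
      refine (ih (by omega)).trans ?_
      have := (hcog (m + k) (by omega)).1
      exact this
  have hsub' : ∀ m ≤ t, 𝒳 m ⊆ 𝒳 t := by
    intro m hm
    have := hsub m (t - m) (by omega)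
    rwa [show m + (t - m) = t by omega] at this
  have main : ∀ k ≤ t, ∀ X ∈ 𝒳 t,
      ∃ (W X' : C) (i : X ⟶ W) (p : W ⟶ X') (w : i ≫ p = 0),
        W ∈ 𝒳 (t - k) ∧ X' ∈ 𝒳 t ∧ (ShortComplex.mk i p w).ShortExact := by
    intro k
    induction k with
    | zero =>
      intro _ X hX
      refine ⟨X ⊞ X, X, biprod.inl, biprod.snd, by simp, ?_, hX,
        (ShortComplex.Splitting.ofHasBinaryBiproduct X X).shortExact⟩
      simpa using hsum t le_rfl hX hX
    | succ k ih =>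
      intro hk X hX
      obtain ⟨W, X', i, p, w1, hW, hX', hse1⟩ := ih (by omega) X hX
      have hWmem : W ∈ 𝒳 (t - (k + 1) + 1) := by
        rwa [show t - (k + 1) + 1 = t - k by omega]
      obtain ⟨V, D, j, q, w2, hV, hD, hse2⟩ :=
        (hcog (t - (k + 1)) (by omega)).2 W hWmem
      obtain ⟨E, r, wr, u, v, wuv, hseK, hseM⟩ := my_ses_comp hse1 hse2
      have hDt : D ∈ 𝒳 t := hsub' (t - (k + 1) + 1) (by omega) hD
      have hE : E ∈ 𝒳 t := hext u v wuv hseM hX' hDt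
      exact ⟨V, E, i ≫ j, r, wr, hV, hE, hseK⟩
  have h0t : 𝒳 0 ⊆ 𝒳 t := hsub' 0 (by omega)
  refine ⟨⟨h0t, ?_⟩, hperp⟩
  intro X hX
  have := main t le_rfl X hX
  rwa [Nat.sub_self] at this
end

section
/- Let R be a commutative noetherian local ring that is complete with respect to the adic topology of its maximal ideal and has Krull dimension at least 1. Then the class P(R) of projective R-modules is not a cogenerator for the class F(R) of flat R-modules; that is, there exists a flat R-module F for which there is no exact sequence 0 → F → P → F' → 0 of R-modules with P projective and F' flat. -/
open CategoryTheory CategoryTheory.Limits CategoryTheory.Abelian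

universe w v u

variable {C : Type u} [Category.{v} C] [Abelian C]

/-- Corollary 5.9: if `R` is a complete local noetherian ring of Krull
dimension at least 1, then the class of projective `R`-modules is not a cogenerator for
the class of flat `R`-modules. -/
theorem stmt_19 (R : Type u) [CommRing R] [IsNoetherianRing R] [IsLocalRing R]
    [IsAdicComplete (IsLocalRing.maximalIdeal R) R]
    (hdim : 1 ≤ ringKrullDim R) :
    ∃ F : ModuleCat.{u} R, Module.Flat R F ∧
      ¬ ∃ (P F' : ModuleCat.{u} R) (i : F ⟶ P) (p : P ⟶ F') (w' : i ≫ p = 0),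
        Module.Projective R P ∧ Module.Flat R F' ∧
          (ShortComplex.mk i p w').ShortExact := by
  classical
  -- Step 1: find a non-nilpotent element of the maximal ideal
  obtain ⟨x, hxm, hxnil⟩ : ∃ x ∈ IsLocalRing.maximalIdeal R, ¬ IsNilpotent x := by
    by_contra h
    push_neg at h
    have hsub : Subsingleton (PrimeSpectrum R) := by
      constructor
      intro p q
      have key : ∀ p : PrimeSpectrum R, p.asIdeal = IsLocalRing.maximalIdeal R := by
        intro p
        refine le_antisymm (IsLocalRing.le_maximalIdeal p.isPrime.ne_top) ?_
        intro y hy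
        obtain ⟨n, hn⟩ := h y hy
        exact p.isPrime.mem_of_pow_mem n (hn ▸ p.asIdeal.zero_mem)
      ext1
      rw [key p, key q]
    have h0 : ringKrullDim R ≤ 0 := Order.krullDim_nonpos_of_subsingleton
    exact absurd (hdim.trans h0) (by
      intro hle
      exact (lt_irrefl (0 : WithBot ℕ∞)) (lt_of_lt_of_le zero_lt_one hle))
  -- Step 2: the counterexample
  have hflat : Module.Flat R (Localization.Away x) := IsLocalization.flat _ (Submonoid.powers x)
  refine ⟨ModuleCat.of R (Localization.Away x), hflat, ?_⟩
  rintro ⟨P, F', i, p, w', hP, hF', hse⟩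
  have hmono : Mono i := hse.mono_f
  have hinj : Function.Injective i := (ModuleCat.mono_iff_injective i).mp hmono
  obtain ⟨s, hs⟩ := Module.projective_def.mp hP
  -- every element of the localization is divisible by xⁿ
  have hdiv : ∀ (a : Localization.Away x) (n : ℕ),
      a = x ^ n • ((IsLocalization.Away.invSelf x) ^ n * a) := by
    intro a n
    rw [Algebra.smul_def, map_pow, ← mul_assoc, ← mul_pow,
      IsLocalization.Away.mul_invSelf, one_pow, one_mul]
  -- every element maps to zero
  have hzero : ∀ a : Localization.Away x, i a = 0 := by
    intro a
    have hc : s (i a) = 0 := by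
      ext j
      refine IsHausdorff.haus (inferInstance :
        IsHausdorff (IsLocalRing.maximalIdeal R) R) _ (fun n => ?_)
      rw [SModEq.zero]
      have hsm : (IsLocalRing.maximalIdeal R ^ n • ⊤ : Submodule R R)
          = (IsLocalRing.maximalIdeal R ^ n : Ideal R) := by
        rw [smul_eq_mul, Ideal.mul_top]
      rw [hsm]
      have ha := hdiv a n
      have : s (i a) = x ^ n • s (i ((IsLocalization.Away.invSelf x) ^ n * a)) := by
        conv_lhs => rw [ha]
        rw [map_smul, map_smul]
      rw [this, Finsupp.smul_apply, smul_eq_mul]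
      exact Ideal.mul_mem_right _ _ (Ideal.pow_mem_pow hxm n)
    have := hs (i a)
    rw [hc, map_zero] at this
    exact this.symm
  -- hence the localization is trivial, so x is nilpotent: contradiction
  have h1 : (1 : Localization.Away x) = 0 := by
    have := hzero 1
    rw [← map_zero i.hom] at this
    exact hinj this
  have : algebraMap R (Localization.Away x) 1 = 0 := by rwa [map_one]
  obtain ⟨⟨m, hm⟩, hmx⟩ := (IsLocalization.map_eq_zero_iff (Submonoid.powers x) _ 1).mp this
  obtain ⟨n, rfl⟩ := hm
  exact hxnil ⟨n, by simpa using hmx⟩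
end
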